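/- Under the stated bilevel setting with constraints, assumptions (A1)–(A3), and the stated approximation scheme with μ_k → 0 and θ_k → 0, the approximate optimal values asymptotically do not exceed the true optimal value: lim sup_{k→∞} ( inf_{x ∈ X} φ_k(x) ) ≤ inf_{x ∈ X} φ(x). -/

import Mathlib

open Filter Topology

noncomputable section

/-- `ℝ^m` as a Euclidean space. -/
abbrev Evec (m : ℕ) := EuclideanSpace ℝ (Fin m)

/-- The lower-level value function `f*(x) = inf { f(x,y) : h(x,y) ≤ 0 }`,
taken in the extended reals (so `inf ∅ = +∞`). -/
def lowerValue {m n : ℕ} (f h : Evec m → Evec n → ℝ) (x : Evec m) : EReal :=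
  ⨅ y ∈ {y : Evec n | h x y ≤ 0}, ((f x y : ℝ) : EReal)

/-- The lower-level solution set `S(x) = argmin { f(x,y) : h(x,y) ≤ 0 }`. -/
def lowerArgmin {m n : ℕ} (f h : Evec m → Evec n → ℝ) (x : Evec m) : Set (Evec n) :=
  {y | h x y ≤ 0 ∧ ∀ y', h x y' ≤ 0 → f x y ≤ f x y'}

/-- The upper-level value function
`φ(x) = inf { F(x,y) : H(x,y) ≤ 0, h(x,y) ≤ 0, f(x,y) ≤ f*(x) }`,
taken in the extended reals (so `inf ∅ = +∞`). -/
def upperValue {m n : ℕ} (F f H h : Evec m → Evec n → ℝ) (x : Evec m) : EReal :=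
  ⨅ y ∈ {y : Evec n |
      H x y ≤ 0 ∧ h x y ≤ 0 ∧ ((f x y : ℝ) : EReal) ≤ lowerValue f h x},
    ((F x y : ℝ) : EReal)

/-- Canonical monotone extension of a nondecreasing function `P : ℝ → [0,+∞]`
to extended-real arguments (agrees with `P` on `ℝ` when `P` is nondecreasing and
continuous). -/
def erealExt (P : ℝ → EReal) : EReal → EReal := fun e =>
  haveI := Classical.dec (e = ⊥)
  if e = ⊥ then ⨅ r : ℝ, P r else sSup (P '' {r : ℝ | (r : EReal) ≤ e})

/-- The regularized barrier value function
`f_k*(x) = inf_y ( f(x,y) + P_{B,k}(h(x,y)) + (μ_k/2)‖y‖² )`. -/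
def fkstar {m n : ℕ} (f h : Evec m → Evec n → ℝ) (PB : ℕ → ℝ → EReal)
    (μ : ℕ → ℝ) (k : ℕ) (x : Evec m) : EReal :=
  ⨅ y : Evec n, (((f x y + μ k / 2 * ‖y‖ ^ 2 : ℝ) : EReal) + PB k (h x y))

/-- The approximate upper-level value function
`φ_k(x) = inf_y ( F(x,y) + P_{H,k}(H(x,y)) + P_{h,k}(h(x,y))
  + P_{f,k}( f(x,y) − f_k*(x) ) + (θ_k/2)‖y‖² )`. -/
def phik {m n : ℕ} (F f H h : Evec m → Evec n → ℝ)
    (PB PH Ph Pf : ℕ → ℝ → EReal) (μ θ : ℕ → ℝ) (k : ℕ) (x : Evec m) : EReal :=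
  ⨅ y : Evec n,
    (((F x y + θ k / 2 * ‖y‖ ^ 2 : ℝ) : EReal) + PH k (H x y) + Ph k (h x y)
      + erealExt (Pf k) (((f x y : ℝ) : EReal) - fkstar f h PB μ k x))

/-- The indicator function `δ_X` of a set `X`. -/
def deltaInd {m : ℕ} (X : Set (Evec m)) (x : Evec m) : EReal :=
  haveI := Classical.dec (x ∈ X)
  if x ∈ X then 0 else ⊤

/-- A family of auxiliary (penalty or modified barrier) functions `ℝ → [0,+∞]`:
each is nonnegative, nondecreasing and continuous; `P_k(ω) → 0` for every `ω ≤ 0`;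
and whenever `limsup_k P_k(ω_k) < +∞` for a real sequence `(ω_k)` one has
`limsup_k ω_k ≤ 0`. -/
def AuxFamily (P : ℕ → ℝ → EReal) : Prop :=
  (∀ k ω, 0 ≤ P k ω) ∧ (∀ k, Monotone (P k)) ∧ (∀ k, Continuous (P k)) ∧
    (∀ ω : ℝ, ω ≤ 0 → Tendsto (fun k => P k ω) atTop (𝓝 0)) ∧
    (∀ ω : ℕ → ℝ, limsup (fun k => P k (ω k)) atTop < ⊤ →
      limsup (fun k => ((ω k : ℝ) : EReal)) atTop ≤ 0)

/-- A family of barrier functions `ℝ → [0,+∞]`: each is nonnegative and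
nondecreasing, equal to `+∞` on `[0,∞)`, with `P_{B,k}(ω) → 0` for every `ω < 0`. -/
def BarrierFamily (PB : ℕ → ℝ → EReal) : Prop :=
  (∀ k ω, 0 ≤ PB k ω) ∧ (∀ k, Monotone (PB k)) ∧
    (∀ k, ∀ ω : ℝ, 0 ≤ ω → PB k ω = ⊤) ∧
    (∀ ω : ℝ, ω < 0 → Tendsto (fun k => PB k ω) atTop (𝓝 0))

/-- `g` is level-bounded in `y` locally uniformly in `x ∈ X`. -/
def LevelBoundedUnif {m n : ℕ} (g : Evec m → Evec n → ℝ) (X : Set (Evec m)) : Prop :=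
  ∀ x₀ ∈ X, ∀ c : ℝ, ∃ δ > (0 : ℝ), ∃ B : Set (Evec n), Bornology.IsBounded B ∧
    ∀ x ∈ X, ‖x - x₀‖ ≤ δ → {y | g x y ≤ c} ⊆ B

end


lemma erealExt_le_of_nonpos {P : ℝ → EReal} (hmono : Monotone P) {e : EReal}
    (he : e ≤ 0) : erealExt P e ≤ P 0 := by
  unfold erealExt
  split_ifs with hb
  · exact iInf_le _ 0
  · refine sSup_le ?_
    rintro _ ⟨r, hr, rfl⟩
    have hr0 : (r : EReal) ≤ 0 := le_trans hr he
    exact hmono (by exact_mod_cast hr0)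

lemma ereal_tendsto_add {u v : ℕ → EReal} {a : ℝ}
    (hu : Tendsto u atTop (𝓝 ((a : ℝ) : EReal)))
    (hv : Tendsto v atTop (𝓝 (0 : EReal))) :
    Tendsto (fun k => u k + v k) atTop (𝓝 ((a : ℝ) : EReal)) := by
  have h0 : ((0 : ℝ) : EReal) = (0 : EReal) := rfl
  have hc : ContinuousAt (fun p : EReal × EReal => p.1 + p.2) ((a : EReal), (0 : EReal)) :=
    EReal.continuousAt_add (Or.inl (by simp)) (Or.inl (by simp))
  have := hc.tendsto.comp (hu.prodMk_nhds hv)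
  simpa using (show Tendsto (fun k => u k + v k) atTop _ from this)

theorem BVFSM_limsup_inf_le_inf
    {m n : ℕ} (F f H h : Evec m → Evec n → ℝ) (X : Set (Evec m))
    (PB PH Ph Pf : ℕ → ℝ → EReal) (μ θ : ℕ → ℝ)
    (hX : IsCompact X)
    (hFc : Continuous fun p : Evec m × Evec n => F p.1 p.2)
    (hfc : Continuous fun p : Evec m × Evec n => f p.1 p.2)
    (hHc : Continuous fun p : Evec m × Evec n => H p.1 p.2)
    (hhc : Continuous fun p : Evec m × Evec n => h p.1 p.2)
    (hfbd : ∃ cf : ℝ, ∀ x y, cf ≤ f x y)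
    (hA1 : ∀ x ∈ X, (lowerArgmin f h x).Nonempty)
    (hA2 : LevelBoundedUnif F X)
    (hA3 : ∀ x y, h x y = 0 → ∀ ε > (0 : ℝ), ∃ y', ‖y' - y‖ < ε ∧ h x y' < 0)
    (hμpos : ∀ k, 0 < μ k) (hθpos : ∀ k, 0 < θ k)
    (hμ0 : Tendsto μ atTop (𝓝 0)) (hθ0 : Tendsto θ atTop (𝓝 0))
    (hPB : BarrierFamily PB) (hPH : AuxFamily PH)
    (hPh : AuxFamily Ph) (hPf : AuxFamily Pf)
    :
    limsup (fun k => ⨅ x ∈ X, phik F f H h PB PH Ph Pf μ θ k x) atTop ≤ ⨅ x ∈ X, upperValue F f H h x := by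
  obtain ⟨cf, hcf⟩ := hfbd
  refine le_iInf fun x => le_iInf fun hx => le_iInf fun y => le_iInf fun hy => ?_
  obtain ⟨hHy, hhy, hfy⟩ := hy
  -- f(x,y) ≤ f_k*(x)
  have hfk : ∀ k, ((f x y : ℝ) : EReal) ≤ fkstar f h PB μ k x := by
    intro k
    refine le_iInf fun y' => ?_
    by_cases hh : h x y' ≤ 0
    · have h1 : ((f x y : ℝ) : EReal) ≤ ((f x y' : ℝ) : EReal) :=
        hfy.trans (iInf₂_le y' hh)
      have h2 : ((f x y' : ℝ) : EReal) ≤ ((f x y' + μ k / 2 * ‖y'‖ ^ 2 : ℝ) : EReal) := by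
        exact_mod_cast le_add_of_nonneg_right
          (mul_nonneg (div_nonneg (hμpos k).le (by norm_num)) (sq_nonneg _))
      exact le_trans (h1.trans h2) (le_add_of_nonneg_right (hPB.1 k _))
    · have hPBtop : PB k (h x y') = ⊤ := hPB.2.2.1 k _ (le_of_not_ge hh)
      rw [hPBtop, EReal.coe_add_top]
      exact le_top
  -- the difference is nonpositive
  have he : ∀ k, ((f x y : ℝ) : EReal) - fkstar f h PB μ k x ≤ 0 := by
    intro k
    have hk := hfk k
    revert hk
    induction fkstar f h PB μ k x using EReal.rec with
    | bot => intro hk; exact absurd hk (by simp)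
    | coe r =>
        intro hk
        rw [show ((f x y : ℝ) : EReal) - (r : EReal) = ((f x y - r : ℝ) : EReal) from rfl]
        exact_mod_cast sub_nonpos.mpr (by exact_mod_cast hk)
    | top =>
        intro _
        rw [show ((f x y : ℝ) : EReal) - (⊤ : EReal) = ⊥ from rfl]
        exact bot_le
  -- pointwise bound
  set g : ℕ → EReal := fun k =>
    ((F x y + θ k / 2 * ‖y‖ ^ 2 : ℝ) : EReal) + PH k (H x y) + Ph k (h x y) + Pf k 0
    with hg
  have hb : ∀ k, (⨅ x' ∈ X, phik F f H h PB PH Ph Pf μ θ k x') ≤ g k := by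
    intro k
    refine le_trans (iInf₂_le x hx) (le_trans (iInf_le _ y) ?_)
    exact add_le_add le_rfl (erealExt_le_of_nonpos (hPf.2.1 k) (he k))
  -- limit of g
  have ht1 : Tendsto (fun k => ((F x y + θ k / 2 * ‖y‖ ^ 2 : ℝ) : EReal)) atTop
      (𝓝 ((F x y : ℝ) : EReal)) := by
    rw [EReal.tendsto_coe]
    have : Tendsto (fun k => F x y + θ k / 2 * ‖y‖ ^ 2) atTop (𝓝 (F x y + 0 / 2 * ‖y‖ ^ 2)) :=
      tendsto_const_nhds.add ((hθ0.div_const 2).mul_const _)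
    simpa using this
  have htg : Tendsto g atTop (𝓝 ((F x y : ℝ) : EReal)) := by
    refine ereal_tendsto_add (ereal_tendsto_add (ereal_tendsto_add ht1 ?_) ?_) ?_
    · exact hPH.2.2.2.1 _ hHy
    · exact hPh.2.2.2.1 _ hhy
    · exact hPf.2.2.2.1 0 le_rfl
  calc limsup (fun k => ⨅ x' ∈ X, phik F f H h PB PH Ph Pf μ θ k x') atTop
      ≤ limsup g atTop := limsup_le_limsup (Eventually.of_forall hb)
    _ = ((F x y : ℝ) : EReal) := htg.limsup_eq
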